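/- arXiv:2107.06228 — 5 statements merged into one kernel-verified Lean document; each statement's English description precedes it below -/
import Mathlib

section
/- Let I be a finitely generated ideal of a commutative Noetherian ring R with generators u_1,...,u_m, and suppose p = (I^k : h) is prime for some h ∈ R. If (I^{k+1} : I) = I^k, then p = (I^{k+1} : h·u_i) for some i, hence p is an associated prime of I^{k+1}. -/
/-!
Write `c i = (I^{k+1} : h u_i)`. Since `I` is generated by the `u_i`, `x h ∈ (I^{k+1} : I)` iff
`x h u_i ∈ I^{k+1}` for every `i`, so `(I^{k+1} : I) = I^k` exhibits `p = (I^k : h)` as the finite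
intersection `⋂ c i`. A prime ideal that is a finite intersection of ideals equals one of them,
and `(I^{k+1} : h u_i)` is the annihilator of the class of `h u_i` in `R ⧸ I^{k+1}`.
-/

namespace Ideal

variable {R : Type*} [CommRing R]

theorem colon_colon_span_range_eq_iInf {ι : Type*} (L : Ideal R) (u : ι → R) (h : R) :
    (L.colon (span (Set.range u))).colon (span {h}) = ⨅ i, L.colon (span {h * u i}) := by
  ext x
  simp only [Submodule.mem_iInf, colon_span, Submodule.mem_colon, Set.forall_mem_range,
    Set.mem_singleton_iff, forall_eq, smul_eq_mul, mul_assoc]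

theorem exists_eq_iInf_of_isPrime_iInf {ι : Type*} [Fintype ι] {f : ι → Ideal R}
    (hp : (⨅ i, f i).IsPrime) : ∃ i, f i = ⨅ i, f i := by
  rw [← Finset.inf_univ_eq_iInf] at hp ⊢
  obtain ⟨i, -, hi⟩ := eq_inf_of_isPrime_inf hp
  exact ⟨i, hi⟩

theorem mem_associatedPrimes_quotient_of_eq_colon {L p : Ideal R} {a : R} (hp : p.IsPrime)
    (hpa : p = L.colon (span {a})) : p ∈ associatedPrimes R (R ⧸ L) := by
  refine ⟨hp, Submodule.Quotient.mk a, ?_⟩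
  rw [← hp.radical]
  congr 1
  ext r
  rw [hpa, Submodule.mem_colon_singleton, Submodule.mem_bot, mem_colon_span_singleton,
    ← Submodule.Quotient.mk_smul, Submodule.Quotient.mk_eq_zero, smul_eq_mul]

end Ideal

theorem colon_prime_persists_general
    {R : Type*} [CommRing R] {m : ℕ} (u : Fin m → R)
    (I : Ideal R) (hI : I = Ideal.span (Set.range u))
    (k : ℕ) (h : R) (p : Ideal R)
    (hp : p = Submodule.colon (I ^ k) (Ideal.span {h}))
    (hprime : p.IsPrime)
    (hspp : Submodule.colon (I ^ (k + 1)) I = I ^ k) :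
    (∃ i : Fin m, p = Submodule.colon (I ^ (k + 1)) (Ideal.span {h * u i})) ∧
      p ∈ associatedPrimes R (R ⧸ I ^ (k + 1)) := by
  have hp_iInf : p = ⨅ i, (I ^ (k + 1)).colon (Ideal.span {h * u i}) := by
    rw [hp, ← hspp, ← Ideal.colon_colon_span_range_eq_iInf, ← hI]
  obtain ⟨i, hi⟩ := Ideal.exists_eq_iInf_of_isPrime_iInf (hp_iInf ▸ hprime)
  have hpi : p = (I ^ (k + 1)).colon (Ideal.span {h * u i}) := hp_iInf.trans hi.symm
  exact ⟨⟨i, hpi⟩, Ideal.mem_associatedPrimes_quotient_of_eq_colon hprime hpi⟩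

theorem colon_prime_persists
    {R : Type*} [CommRing R] [IsNoetherianRing R] {m : ℕ} (u : Fin m → R)
    (I : Ideal R) (hI : I = Ideal.span (Set.range u))
    (k : ℕ) (hk : 1 ≤ k) (h : R) (p : Ideal R)
    (hp : p = Submodule.colon (I ^ k) (Ideal.span {h}))
    (hprime : p.IsPrime)
    (hspp : Submodule.colon (I ^ (k + 1)) I = I ^ k) :
    (∃ i : Fin m, p = Submodule.colon (I ^ (k + 1)) (Ideal.span {h * u i})) ∧
      p ∈ associatedPrimes R (R ⧸ I ^ (k + 1)) :=
  colon_prime_persists_general u I hI k h p hp hprime hspp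
end

section
/- Let G be a finite simple graph. The dominating ideal DI(G) equals the Alexander dual of the closed neighborhood ideal NI(G), i.e., DI(G) = ⋂_{v ∈ V(G)} (x_u : u ∈ N[v]). -/
/-!
Both sides are monomial ideals, so membership of a polynomial is decided monomial by monomial.
A monomial `x^m` lies in `⋂_v (x_u : u ∈ N[v])` iff `supp m` meets every closed neighborhood,
i.e. `supp m` is dominating, and it lies in `DI(G)` iff `supp m` contains a minimal dominating
set. These agree because every dominating set contains a minimal one.
-/

open MvPolynomial

variable {V : Type*} [Fintype V] (K : Type*) [Field K]

open scoped Classical in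
/-- The monomial `∏_{j ∈ N[v]} x_j` of the closed neighborhood of `v`. -/
noncomputable def nbhdMonomial (G : SimpleGraph V) (v : V) : MvPolynomial V K :=
  X v * ∏ j ∈ Finset.univ.filter (fun j => G.Adj v j), X j

/-- The closed neighborhood ideal of a graph. -/
noncomputable def NI (G : SimpleGraph V) : Ideal (MvPolynomial V K) :=
  Ideal.span (Set.range fun v => nbhdMonomial K G v)

/-- `S` is a dominating set of `G`. -/
def Dominates (G : SimpleGraph V) (S : Finset V) : Prop :=
  ∀ v : V, ∃ u ∈ S, u = v ∨ G.Adj v u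

/-- `S` is a minimal dominating set of `G`. -/
def MinimalDominating (G : SimpleGraph V) (S : Finset V) : Prop :=
  Dominates G S ∧ ∀ T : Finset V, T ⊂ S → ¬ Dominates G T

/-- The dominating ideal of a graph. -/
noncomputable def DI (G : SimpleGraph V) : Ideal (MvPolynomial V K) :=
  Ideal.span { m | ∃ S : Finset V, MinimalDominating G S ∧ m = ∏ i ∈ S, X i }

namespace SimpleGraph

variable {W : Type*} (G : SimpleGraph W)

theorem minimalDominating_iff_minimal {S : Finset W} :
    MinimalDominating G S ↔ Minimal (Dominates G) S :=
  minimal_iff_forall_lt.symm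

theorem exists_minimalDominating_subset_iff {T : Finset W} :
    (∃ S, MinimalDominating G S ∧ S ⊆ T) ↔ Dominates G T := by
  refine ⟨fun ⟨S, hS, hST⟩ v => ?_, fun hT => ?_⟩
  · obtain ⟨u, huS, hu⟩ := hS.1 v
    exact ⟨u, hST huS, hu⟩
  · obtain ⟨S, hST, hS⟩ := exists_minimal_le_of_wellFoundedLT _ T hT
    exact ⟨S, (minimalDominating_iff_minimal G).2 hS, hST⟩

end SimpleGraph

namespace MvPolynomial

variable {σ R : Type*} [CommSemiring R]

theorem prod_X_eq_monomial_sum_single (S : Finset σ) :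
    ∏ i ∈ S, (X i : MvPolynomial σ R) = monomial (∑ i ∈ S, Finsupp.single i 1) 1 :=
  (monomial_sum_one S _).symm

end MvPolynomial

theorem Finsupp.sum_single_one_le_iff {σ : Type*} {S : Finset σ} {m : σ →₀ ℕ} :
    ∑ i ∈ S, single i 1 ≤ m ↔ S ⊆ m.support := by
  classical
  simp only [Finsupp.le_def, Finsupp.finsetSum_apply, Finsupp.single_apply, Finset.sum_ite_eq',
    Finset.subset_iff, Finsupp.mem_support_iff]
  refine ⟨fun h i hi => ?_, fun h i => ?_⟩
  · simpa [hi, Nat.one_le_iff_ne_zero] using h i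
  · split_ifs with hi
    · exact Nat.one_le_iff_ne_zero.2 (h hi)
    · exact Nat.zero_le _

open SimpleGraph

theorem mem_iInf_span_X_closedNbhd_iff {W R : Type*} [CommSemiring R] (G : SimpleGraph W)
    {f : MvPolynomial W R} :
    f ∈ ⨅ v : W, Ideal.span (X '' { u : W | u = v ∨ G.Adj v u }) ↔
      ∀ m ∈ f.support, Dominates G m.support := by
  simp only [Ideal.mem_iInf, mem_ideal_span_X_image, Dominates, Finsupp.mem_support_iff]
  exact ⟨fun h m hm v => (h v m hm).imp fun u hu => hu.symm,
    fun h v m hm => (h m hm v).imp fun u hu => hu.symm⟩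

theorem DI_eq_span_monomial {W : Type*} (G : SimpleGraph W) :
    DI K G = Ideal.span ((fun d => monomial d 1) ''
      ((fun S => ∑ i ∈ S, Finsupp.single i 1) '' { S | MinimalDominating G S })) := by
  rw [DI, Set.image_image]
  congr 1
  ext
  simp [prod_X_eq_monomial_sum_single, eq_comm]

theorem mem_DI_iff {W : Type*} (G : SimpleGraph W) {f : MvPolynomial W K} :
    f ∈ DI K G ↔ ∀ m ∈ f.support, Dominates G m.support := by
  simp only [DI_eq_span_monomial, mem_ideal_span_monomial_image, Set.exists_mem_image,
    Finsupp.sum_single_one_le_iff, ← exists_minimalDominating_subset_iff, Set.mem_ofPred_eq]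

/-- The dominating ideal is the Alexander dual of the closed neighborhood ideal:
`DI(G) = ⋂_{v ∈ V(G)} (x_u : u ∈ N[v])`. -/
theorem DI_eq_alexander_dual_NI (G : SimpleGraph V) :
    DI K G = ⨅ v : V, Ideal.span (X '' { u : V | u = v ∨ G.Adj v u }) := by
  ext f
  rw [mem_DI_iff, mem_iInf_span_X_closedNbhd_iff]
end

section
/- The 3-path ideal of a path graph is normally torsion-free: for n ≥ 3, the ideal L = (x_i x_{i+1} x_{i+2} : i = 1,...,n−2) ⊂ K[x_1,...,x_n] is normally torsion-free. -/
/-!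
An associated prime `P = (L^k : f)` of a monomial ideal is a colon `(L^k : x^a)` by a single
monomial: choose `f` with the fewest terms; if some `b ∈ P` had its leading term outside `P`,
then `lt(b) f` would be another choice of `f` whose leading term lies in `L^k` and could be
dropped. So `P` is monomial, and being prime it is generated by the `x_j`, `j ∈ S`.

A monomial `x^v` lies in `L^k` iff `k` triples `{i, i+1, i+2}` can be packed under the capacity
`v`. The triples of a path are Mengerian: for every capacity a maximum packing is as large as a
minimum weighted vertex cover (greedy induction from the left end). A minimum cover `C` for the
capacity `a` has weight `< k` and contains `S`, and counting along `C` shows `P = (L : x^b)` for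
`b` the indicator of the complement of `S`.
-/

open MvPolynomial

/-- `I` is normally torsion-free. -/
def NormallyTorsionFree {R : Type*} [CommRing R] (I : Ideal R) : Prop :=
  ∀ k : ℕ, 1 ≤ k → associatedPrimes R (R ⧸ I ^ k) ⊆ associatedPrimes R (R ⧸ I)

open Finset

namespace MvPolynomial

variable {σ R : Type*}

theorem support_sub_monomial_coeff [CommRing R] [DecidableEq σ] (p : MvPolynomial σ R)
    (v : σ →₀ ℕ) :
    (p - monomial v (coeff v p)).support = p.support.erase v := by
  ext w
  by_cases hw : w = v
  · subst hw; simp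
  · simp [coeff_monomial, Ne.symm hw, hw]

theorem card_support_monomial_mul_le [CommSemiring R] (v : σ →₀ ℕ) (c : R)
    (g : MvPolynomial σ R) :
    #(monomial v c * g).support ≤ #g.support := by
  classical
  refine (card_le_card fun w hw => ?_).trans (card_image_le (f := (v + ·)))
  rw [mem_support_iff, coeff_monomial_mul'] at hw
  split_ifs at hw with hvw
  · exact mem_image.2
      ⟨w - v, mem_support_iff.2 (right_ne_zero_of_mul hw), add_tsub_cancel_of_le hvw⟩
  · exact absurd rfl hw

end MvPolynomial

namespace Ideal

section CommRing

variable {R : Type*} [CommRing R] {I P : Ideal R}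

theorem colon_bot_quotient_mk (I : Ideal R) (f : R) :
    (⊥ : Submodule R (R ⧸ I)).colon {Ideal.Quotient.mk I f} = I.colon {f} := by
  ext r
  simp [Algebra.smul_def, ← map_mul, Ideal.Quotient.eq_zero_iff_mem]

theorem mem_associatedPrimes_quotient_iff [IsNoetherianRing R] :
    P ∈ associatedPrimes R (R ⧸ I) ↔ P.IsPrime ∧ ∃ f : R, P = I.colon {f} := by
  refine isAssociatedPrime_iff.trans (and_congr_right fun _ => ⟨?_, ?_⟩)
  · rintro ⟨x, rfl⟩
    obtain ⟨f, rfl⟩ := Ideal.Quotient.mk_surjective x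
    exact ⟨f, colon_bot_quotient_mk I f⟩
  · rintro ⟨f, rfl⟩
    exact ⟨_, (colon_bot_quotient_mk I f).symm⟩

theorem colon_singleton_eq_of_sub_mem {f g : R} (h : f - g ∈ I) :
    I.colon {f} = I.colon {g} := by
  ext r
  have hr : r * f - r * g ∈ I := mul_sub r f g ▸ I.mul_mem_left r h
  simp only [Submodule.mem_colon_singleton, smul_eq_mul]
  exact ⟨fun hf => by simpa using I.sub_mem hf hr, fun hg => by simpa using I.add_mem hr hg⟩

theorem colon_singleton_mul_eq_of_notMem [P.IsPrime] {f b : R} (hP : P = I.colon {f})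
    (hb : b ∉ P) : I.colon {b * f} = P := by
  ext r
  rw [Submodule.mem_colon_singleton, smul_eq_mul, ← mul_assoc, ← smul_eq_mul,
    ← Submodule.mem_colon_singleton, ← hP, IsPrime.mul_mem_iff_mem_or_mem ‹_›,
    or_iff_left hb]

end CommRing

section Monomial

variable {σ R : Type*} [CommSemiring R] {I J P : Ideal (MvPolynomial σ R)}

def IsMonomial (I : Ideal (MvPolynomial σ R)) : Prop :=
  ∀ p ∈ I, ∀ v ∈ p.support, monomial v 1 ∈ I

theorem IsMonomial.mem_iff (hI : I.IsMonomial) {p : MvPolynomial σ R} :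
    p ∈ I ↔ ∀ v ∈ p.support, monomial v 1 ∈ I := by
  refine ⟨hI p, fun h => ?_⟩
  rw [p.as_sum]
  refine I.sum_mem fun v hv => ?_
  rw [← mul_one (coeff v p), ← C_mul_monomial]
  exact I.mul_mem_left _ (h v hv)

theorem IsMonomial.ext (hI : I.IsMonomial) (hJ : J.IsMonomial)
    (h : ∀ v, monomial v 1 ∈ I ↔ monomial v 1 ∈ J) : I = J :=
  Ideal.ext fun _ => by rw [hI.mem_iff, hJ.mem_iff]; exact forall₂_congr fun v _ => h v

theorem isMonomial_span_monomial (A : Set (σ →₀ ℕ)) :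
    (span ((fun d => monomial d (1 : R)) '' A)).IsMonomial := by
  intro p hp v hv
  obtain ⟨d, hd, hdv⟩ := mem_ideal_span_monomial_image.1 hp v hv
  have hvd : monomial v (1 : R) = monomial (v - d) 1 * monomial d 1 := by
    rw [monomial_mul, one_mul, tsub_add_cancel_of_le hdv]
  exact hvd ▸ mul_mem_left _ _ (subset_span ⟨d, hd, rfl⟩)

theorem monomial_mem_span_monomial_iff [Nontrivial R] {A : Set (σ →₀ ℕ)}
    {v : σ →₀ ℕ} :
    monomial v (1 : R) ∈ span ((fun d => monomial d (1 : R)) '' A) ↔ ∃ d ∈ A, d ≤ v := by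
  classical
  rw [mem_ideal_span_monomial_image, support_monomial, if_neg one_ne_zero]
  simp

theorem monomial_mem_colon_monomial_iff {v a : σ →₀ ℕ} :
    monomial v 1 ∈ I.colon {monomial a (1 : R)} ↔ monomial (v + a) 1 ∈ I := by
  simp [monomial_mul]

theorem IsMonomial.colon_monomial (hI : I.IsMonomial) (a : σ →₀ ℕ) :
    (I.colon {monomial a (1 : R)}).IsMonomial := by
  intro p hp v hv
  rw [Submodule.mem_colon_singleton, smul_eq_mul] at hp
  rw [monomial_mem_colon_monomial_iff]
  refine hI _ hp _ ?_
  rwa [mem_support_iff, coeff_mul_monomial, mul_one, ← mem_support_iff]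

theorem IsMonomial.monomial_add_mem (hI : I.IsMonomial) {v u : σ →₀ ℕ}
    {g : MvPolynomial σ R}
    (h : monomial v 1 * g ∈ I) (hu : u ∈ g.support) : monomial (v + u) 1 ∈ I := by
  refine hI _ h _ ?_
  rwa [mem_support_iff, coeff_monomial_mul, one_mul, ← mem_support_iff]

theorem IsPrime.monomial_mem_iff (hP : P.IsPrime) {v : σ →₀ ℕ} :
    monomial v (1 : R) ∈ P ↔ ∃ j, X j ∈ P ∧ v j ≠ 0 := by
  have := hP
  rw [monomial_eq, C_1, one_mul, Finsupp.prod, IsPrime.prod_mem_iff]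
  constructor
  · rintro ⟨j, hj, hjJ⟩
    exact ⟨j, hP.mem_of_pow_mem _ hjJ, Finsupp.mem_support_iff.1 hj⟩
  · rintro ⟨j, hj, hvj⟩
    exact ⟨j, Finsupp.mem_support_iff.2 hvj, P.pow_mem_of_mem hj _ (Nat.pos_of_ne_zero hvj)⟩

theorem IsMonomial.le_colon_monomial_of_mem_support (hI : I.IsMonomial) (hP : P.IsMonomial)
    {g : MvPolynomial σ R} (hg : P = I.colon {g}) {u : σ →₀ ℕ} (hu : u ∈ g.support) :
    P ≤ I.colon {monomial u 1} := fun b hb => by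
  rw [Submodule.mem_colon_singleton, smul_eq_mul, hI.mem_iff]
  intro w hw
  rw [mem_support_iff, coeff_mul_monomial'] at hw
  split_ifs at hw with huw
  · have hvg : monomial (w - u) 1 * g ∈ I := by
      simpa [hg] using hP b hb _ (mem_support_iff.2 (left_ne_zero_of_mul hw))
    exact tsub_add_cancel_of_le huw ▸ hI.monomial_add_mem hvg hu
  · exact absurd rfl hw

theorem inf_colon_monomial_le_colon (g : MvPolynomial σ R) :
    g.support.inf (fun u => I.colon {monomial u 1}) ≤ I.colon {g} := fun b hb => by
  rw [Submodule.mem_colon_singleton, smul_eq_mul, g.as_sum, mul_sum]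
  refine I.sum_mem fun u hu => ?_
  have hbu : b * monomial u 1 ∈ I := by
    simpa using Finset.inf_le (f := fun u => I.colon {monomial u 1}) hu hb
  rw [← mul_one (coeff u g), ← C_mul_monomial, mul_left_comm]
  exact I.mul_mem_left _ hbu

end Monomial

section Field

variable {σ K : Type*} [Field K] {I P : Ideal (MvPolynomial σ K)}

theorem monomial_mem_iff_monomial_one_mem {v : σ →₀ ℕ} {c : K} (hc : c ≠ 0) :
    monomial v c ∈ I ↔ monomial v 1 ∈ I := by
  rw [← mul_one c, ← C_mul_monomial, I.unit_mul_mem_iff_mem (hc.isUnit.map C)]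

theorem exists_colon_card_support_lt {g : MvPolynomial σ K} {v : σ →₀ ℕ}
    (hv : v ∈ g.support) (hvI : monomial v 1 ∈ I) :
    ∃ g', I.colon {g'} = I.colon {g} ∧ #g'.support < #g.support := by
  classical
  refine ⟨g - monomial v (coeff v g), colon_singleton_eq_of_sub_mem ?_, ?_⟩
  · rwa [sub_sub_cancel_left, neg_mem_iff,
      monomial_mem_iff_monomial_one_mem (mem_support_iff.1 hv)]
  · rw [support_sub_monomial_coeff]
    exact card_erase_lt_of_mem hv

theorem isMonomial_of_leadingTerm_mem (m : MonomialOrder σ)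
    (h : ∀ p ∈ P, m.leadingTerm p ∈ P) : P.IsMonomial := by
  classical
  intro p
  induction hn : #p.support using Nat.strong_induction_on generalizing p with
  | _ n ih =>
  intro hp v hv
  have hlead : monomial (m.degree p) (coeff (m.degree p) p) ∈ P := h p hp
  by_cases hvd : v = m.degree p
  · rwa [hvd, ← monomial_mem_iff_monomial_one_mem (mem_support_iff.1 (hvd ▸ hv))]
  · refine ih _ ?_ _ rfl (P.sub_mem hp hlead) v ?_
    all_goals rw [support_sub_monomial_coeff]
    · exact hn ▸ card_erase_lt_of_mem (m.degree_mem_support (by rintro rfl; simp at hv))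
    · exact mem_erase.2 ⟨hvd, hv⟩

theorem IsMonomial.isMonomial_of_minimal_colon (hI : I.IsMonomial) [P.IsPrime]
    {g : MvPolynomial σ K} (hg : P = I.colon {g})
    (hmin : ∀ g', P = I.colon {g'} → #g.support ≤ #g'.support) : P.IsMonomial := by
  classical
  -- a linear order on `σ` whose `>` is well-founded, so that `lex` is a monomial order
  let : LinearOrder σ := linearOrderOfSTO (Function.swap WellOrderingRel)
  have : WellFoundedGT σ := ⟨WellOrderingRel.isWellOrder.wf.mono fun _ _ h => h⟩
  let m : MonomialOrder σ := MonomialOrder.lex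
  have hg0 : g ≠ 0 := by
    rintro rfl
    exact IsPrime.ne_top ‹_› (hg.trans Submodule.colon_singleton_zero)
  refine isMonomial_of_leadingTerm_mem m fun b hb => ?_
  -- Otherwise `lt(b) * g` is another choice of `g`, and its term of degree
  -- `deg b + deg g`, the leading monomial of `b * g ∈ I`, can be dropped.
  by_contra hbP
  have hb0 : b ≠ 0 := by rintro rfl; simp at hbP
  have hcolon : I.colon {m.leadingTerm b * g} = P := colon_singleton_mul_eq_of_notMem hg hbP
  have hdeg : m.degree b + m.degree g ∈ (m.leadingTerm b * g).support := by
    rw [mem_support_iff, MonomialOrder.leadingTerm, coeff_monomial_mul]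
    exact mul_ne_zero (m.leadingCoeff_ne_zero_iff.2 hb0) (m.leadingCoeff_ne_zero_iff.2 hg0)
  have hdegI : monomial (m.degree b + m.degree g) 1 ∈ I := by
    refine hI _ (by simpa [hg] using hb) _ ?_
    rw [← m.degree_mul hb0 hg0]
    exact m.degree_mem_support (mul_ne_zero hb0 hg0)
  obtain ⟨g', hg', hlt⟩ := exists_colon_card_support_lt hdeg hdegI
  exact (hmin g' (hcolon ▸ hg').symm).not_gt
    (hlt.trans_le (card_support_monomial_mul_le _ _ _))

theorem IsMonomial.exists_colon_monomial_eq (hI : I.IsMonomial) [hP : P.IsPrime]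
    {f : MvPolynomial σ K} (hPf : P = I.colon {f}) : ∃ a, P = I.colon {monomial a 1} := by
  obtain ⟨g, hg, hmin⟩ := (measure fun g : MvPolynomial σ K => #g.support).wf.has_min
    {g | P = I.colon {g}} ⟨f, hPf⟩
  replace hg : P = I.colon {g} := hg
  have hPmono := hI.isMonomial_of_minimal_colon hg fun g' hg' => not_lt.1 (hmin g' hg')
  obtain ⟨u, hu, hleP⟩ := hP.inf_le'.1 (hg ▸ inf_colon_monomial_le_colon g)
  exact ⟨u, le_antisymm (hI.le_colon_monomial_of_mem_support hPmono hg hu) hleP⟩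

end Field

end Ideal

section Packing

variable {σ : Type*} (E : Set (σ →₀ ℕ))

def sumsOf : ℕ → Set (σ →₀ ℕ)
  | 0 => {0}
  | k + 1 => Set.image2 (· + ·) (sumsOf k) E

def HasPacking (k : ℕ) (a : σ →₀ ℕ) : Prop :=
  ∃ d ∈ sumsOf E k, d ≤ a

def IsCover (C : Set σ) : Prop :=
  ∀ e ∈ E, ∃ j ∈ C, e j ≠ 0

def HasTightCover (a : σ →₀ ℕ) : Prop :=
  ∃ C : Finset σ, IsCover E C ∧ HasPacking E (∑ j ∈ C, a j) a

/-- For every capacity, a maximum packing is as large as a minimum weighted cover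
(`IsCover.le_sum_of_hasPacking` is the easy inequality). -/
def IsMengerian : Prop :=
  ∀ a, HasTightCover E a

variable {E} {F : Set (σ →₀ ℕ)} {k m : ℕ} {a d e : σ →₀ ℕ}

theorem add_mem_sumsOf (hd : d ∈ sumsOf E k) (he : e ∈ E) : d + e ∈ sumsOf E (k + 1) :=
  Set.mem_image2_of_mem hd he

theorem nsmul_mem_sumsOf (he : e ∈ E) : ∀ k, k • e ∈ sumsOf E k
  | 0 => by simp [sumsOf]
  | k + 1 => succ_nsmul e k ▸ add_mem_sumsOf (nsmul_mem_sumsOf he k) he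

theorem sumsOf_one : sumsOf E 1 = E := by
  simp [sumsOf]

theorem sumsOf_mono (h : E ⊆ F) : ∀ k, sumsOf E k ⊆ sumsOf F k
  | 0 => subset_rfl
  | k + 1 => Set.image2_subset (sumsOf_mono h k) h

theorem hasPacking_one_iff : HasPacking E 1 a ↔ ∃ e ∈ E, e ≤ a := by
  rw [HasPacking, sumsOf_one]

theorem HasPacking.zero : HasPacking E 0 a :=
  ⟨0, rfl, zero_le⟩

theorem HasPacking.mono_set (h : HasPacking E k a) (hEF : E ⊆ F) : HasPacking F k a :=
  let ⟨d, hd, hda⟩ := h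
  ⟨d, sumsOf_mono hEF k hd, hda⟩

theorem HasPacking.add (h : HasPacking E k a) (he : e ∈ E) : HasPacking E (k + 1) (a + e) :=
  let ⟨d, hd, hda⟩ := h
  ⟨d + e, add_mem_sumsOf hd he, add_le_add hda le_rfl⟩

theorem HasPacking.of_succ (h : HasPacking E (k + 1) a) : HasPacking E k a :=
  let ⟨_, ⟨d, hd, _, _, rfl⟩, hda⟩ := h
  ⟨d, hd, le_self_add.trans hda⟩

theorem HasPacking.of_le (h : HasPacking E k a) (hmk : m ≤ k) : HasPacking E m a := by
  induction k, hmk using Nat.le_induction with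
  | base => exact h
  | succ k _ ih => exact ih h.of_succ

theorem IsCover.le_sum {C : Finset σ} (hC : IsCover E C) :
    ∀ {k d}, d ∈ sumsOf E k → k ≤ ∑ j ∈ C, d j
  | 0, _, _ => Nat.zero_le _
  | k + 1, _, ⟨d, hd, e, he, rfl⟩ => by
    obtain ⟨j, hj, hej⟩ := hC e he
    have := hC.le_sum hd
    have := single_le_sum (fun i _ => Nat.zero_le (e i)) hj
    show k + 1 ≤ ∑ j ∈ C, (d + e) j
    simp only [Finsupp.add_apply, sum_add_distrib]
    omega

theorem IsCover.le_sum_of_hasPacking {C : Finset σ} (hC : IsCover E C) (h : HasPacking E k a) :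
    k ≤ ∑ j ∈ C, a j :=
  let ⟨_, hd, hda⟩ := h
  (hC.le_sum hd).trans (sum_le_sum fun j _ => hda j)

variable {S : Set σ}

theorem isCover_of_forall_hasPacking_iff
    (hS : ∀ v, (∃ j ∈ S, v j ≠ 0) ↔ HasPacking E k (a + v)) :
    IsCover E S := fun e he => by
  obtain ⟨j, hj, hej⟩ := (hS (k • e)).2 ⟨k • e, nsmul_mem_sumsOf he k, le_add_self⟩
  exact ⟨j, hj, fun h => hej (by simp [h])⟩

theorem IsMengerian.exists_cover_superset_sum_lt (hE : IsMengerian E)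
    (hS : ∀ v, (∃ j ∈ S, v j ≠ 0) ↔ HasPacking E k (a + v)) :
    ∃ C : Finset σ, IsCover E C ∧ S ⊆ C ∧ ∑ j ∈ C, a j < k := by
  classical
  obtain ⟨C, hC, hCa⟩ := hE a
  have hlt : ∑ j ∈ C, a j < k := by
    refine lt_of_not_ge fun h => ?_
    simpa using (hS 0).2 (by simpa using hCa.of_le h)
  refine ⟨C, hC, fun j hj => ?_, hlt⟩
  by_contra hjC
  have := hC.le_sum_of_hasPacking ((hS (Finsupp.single j 1)).1 ⟨j, hj, by simp⟩)
  simp [sum_add_distrib, Finsupp.single_apply, show j ∉ C from hjC] at this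
  omega

theorem IsMengerian.exists_hasPacking_one_iff [Finite σ] (hE : IsMengerian E)
    (hsq : ∀ e ∈ E, ∀ j, e j ≤ 1)
    (hS : ∀ v, (∃ j ∈ S, v j ≠ 0) ↔ HasPacking E k (a + v)) :
    ∃ b, ∀ v, (∃ j ∈ S, v j ≠ 0) ↔ HasPacking E 1 (b + v) := by
  -- For `I = (x^e : e ∈ E)`, `hS` says `(x_j : j ∈ S) = (I^k : x^a)` and the conclusion
  -- says `(x_j : j ∈ S) = (I : x^b)`.
  classical
  obtain ⟨C, hC, hSC, hlt⟩ := hE.exists_cover_superset_sum_lt hS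
  refine ⟨Finsupp.equivFunOnFinite.symm fun j => if j ∈ S then 0 else 1, fun v => ?_⟩
  rw [hasPacking_one_iff]
  refine ⟨fun hv => ?_, ?_⟩
  · by_contra! hno
    have hT : IsCover E (C.filter (v · = 0)) := fun e he => by
      obtain ⟨i, hi⟩ : ∃ i, _ < e i := by simpa [Finsupp.le_def] using hno e he
      have := hsq e he i
      by_cases hiS : i ∈ S
      · rw [if_pos hiS] at hi
        exact ⟨i, mem_filter.2 ⟨hSC hiS, by omega⟩, by omega⟩
      · rw [if_neg hiS] at hi
        omega
    have := calc
      k ≤ ∑ j ∈ C.filter (v · = 0), (a + v) j := hT.le_sum_of_hasPacking ((hS v).1 hv)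
      _ = ∑ j ∈ C.filter (v · = 0), a j :=
          sum_congr rfl fun j hj => by simp [(mem_filter.1 hj).2]
      _ ≤ ∑ j ∈ C, a j := sum_le_sum_of_subset (filter_subset _ _)
    omega
  · rintro ⟨e, he, heb⟩
    obtain ⟨j, hj, hej⟩ := isCover_of_forall_hasPacking_iff hS e he
    refine ⟨j, hj, fun hvj => hej ?_⟩
    have := heb j
    have := hsq e he j
    simp [hj, hvj] at *
    omega

end Packing

namespace Ideal

variable {σ R : Type*} [CommSemiring R]

theorem span_monomial_pow (E : Set (σ →₀ ℕ)) (k : ℕ) :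
    span ((fun d => monomial d (1 : R)) '' E) ^ k =
      span ((fun d => monomial d (1 : R)) '' sumsOf E k) := by
  induction k with
  | zero => simp [sumsOf]
  | succ k ih =>
    rw [pow_succ, ih, span_mul_span', sumsOf, ← Set.image2_mul, Set.image_image2_distrib]
    intro d e
    rw [monomial_mul, one_mul]

theorem monomial_mem_span_monomial_pow_iff [Nontrivial R] {E : Set (σ →₀ ℕ)} {k : ℕ}
    {v : σ →₀ ℕ} :
    monomial v (1 : R) ∈ span ((fun d => monomial d (1 : R)) '' E) ^ k ↔ HasPacking E k v := by
  rw [span_monomial_pow, monomial_mem_span_monomial_iff, HasPacking]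

end Ideal

theorem normallyTorsionFree_span_monomial {σ K : Type*} [Finite σ] [Field K]
    {E : Set (σ →₀ ℕ)} (hsq : ∀ e ∈ E, ∀ j, e j ≤ 1) (hE : IsMengerian E) :
    NormallyTorsionFree (Ideal.span ((fun d => monomial d (1 : K)) '' E)) := by
  set I := Ideal.span ((fun d => monomial d (1 : K)) '' E)
  intro k _ P hP
  obtain ⟨hPprime, f, hPf⟩ := Ideal.mem_associatedPrimes_quotient_iff.1 hP
  have hIk : (I ^ k).IsMonomial := by
    rw [Ideal.span_monomial_pow]; exact Ideal.isMonomial_span_monomial _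
  obtain ⟨a, ha⟩ := hIk.exists_colon_monomial_eq hPf
  have hPmono : P.IsMonomial := ha ▸ hIk.colon_monomial a
  have hmem : ∀ v, monomial v 1 ∈ P ↔ HasPacking E k (a + v) := fun v => by
    rw [ha, Ideal.monomial_mem_colon_monomial_iff, add_comm,
      Ideal.monomial_mem_span_monomial_pow_iff]
  obtain ⟨b, hb⟩ := hE.exists_hasPacking_one_iff hsq (S := {j | X j ∈ P})
    fun v => hPprime.monomial_mem_iff.symm.trans (hmem v)
  refine Ideal.mem_associatedPrimes_quotient_iff.2 ⟨hPprime, monomial b 1,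
    hPmono.ext ((Ideal.isMonomial_span_monomial E).colon_monomial b) fun v => ?_⟩
  rw [hPprime.monomial_mem_iff, Ideal.monomial_mem_colon_monomial_iff, ← pow_one I,
    Ideal.monomial_mem_span_monomial_pow_iff, add_comm]
  exact hb v

/-- The exponent vector of `x_i x_{i+1} x_{i+2}`, the variables being `x_0, …, x_{n-1}`. -/
noncomputable def pathTriple (n i : ℕ) : Fin n →₀ ℕ :=
  Finsupp.equivFunOnFinite.symm fun j => if i ≤ j.1 ∧ j.1 ≤ i + 2 then 1 else 0

def pathTriplesFrom (n s : ℕ) : Set (Fin n →₀ ℕ) :=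
  pathTriple n '' {i | s ≤ i ∧ i + 2 < n}

section PathTriples

variable {n s : ℕ}

theorem pathTriple_apply (i : ℕ) (j : Fin n) :
    pathTriple n i j = if i ≤ j.1 ∧ j.1 ≤ i + 2 then 1 else 0 :=
  rfl

theorem pathTriple_le_one : ∀ e ∈ pathTriplesFrom n s, ∀ j, e j ≤ 1 := by
  rintro _ ⟨i, -, rfl⟩ j
  rw [pathTriple_apply]
  split_ifs <;> omega

theorem isCover_pathTriplesFrom_iff {C : Set (Fin n)} :
    IsCover (pathTriplesFrom n s) C ↔
      ∀ i, s ≤ i → i + 2 < n → ∃ j ∈ C, i ≤ j.1 ∧ j.1 ≤ i + 2 := by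
  simp only [IsCover, pathTriplesFrom, Set.forall_mem_image, Set.mem_ofPred_eq, and_imp]
  simp [pathTriple_apply]

theorem X_mul_X_mul_X_eq_monomial_pathTriple {R : Type*} [CommSemiring R] {i : ℕ}
    {a b c : Fin n} (ha : a.1 = i) (hb : b.1 = i + 1) (hc : c.1 = i + 2) :
    (X a * X b * X c : MvPolynomial (Fin n) R) = monomial (pathTriple n i) 1 := by
  rw [X, X, X, monomial_mul, monomial_mul, one_mul, one_mul]
  refine congrArg (monomial · 1) (Finsupp.ext fun j => ?_)
  rw [pathTriple_apply]
  simp only [Finsupp.coe_add, Pi.add_apply, Finsupp.single_apply, Fin.ext_iff]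
  split_ifs <;> omega

theorem pathTriplesFrom_eq_empty (hs : n ≤ s + 2) : pathTriplesFrom n s = ∅ :=
  Set.image_eq_empty.2 (Set.eq_empty_of_forall_notMem fun _ hi => by simp at hi; omega)

theorem isCover_pathTriplesFrom_erase {C : Finset (Fin n)} (hC : IsCover (pathTriplesFrom n s) C)
    {j j' : Fin n} (hj' : j' ∈ C) (hjj' : j < j') (hj's : j'.1 ≤ s + 2) :
    IsCover (pathTriplesFrom n s) (C.erase j) := by
  rw [isCover_pathTriplesFrom_iff] at hC ⊢
  intro i hsi hi
  obtain ⟨l, hl, hil⟩ := hC i hsi hi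
  by_cases hlj : l = j
  · subst hlj
    exact ⟨j', mem_erase.2 ⟨hjj'.ne', hj'⟩, by omega⟩
  · exact ⟨l, mem_erase.2 ⟨hlj, hl⟩, hil⟩

theorem sum_pathTriple_eq_one_of_minimal {C : Finset (Fin n)}
    (hC : Minimal (fun D : Finset (Fin n) => IsCover (pathTriplesFrom n s) D) C)
    (hs : s + 2 < n) : ∑ j ∈ C, pathTriple n s j = 1 := by
  obtain ⟨j₀, hj₀, hsj₀⟩ := isCover_pathTriplesFrom_iff.1 hC.prop s le_rfl hs
  have hnot : ∀ j ∈ C, ∀ j' ∈ C, j < j' → j'.1 ≤ s + 2 → False :=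
    fun j hj j' hj' hjj' hj's => notMem_erase j C
      (hC.2 (isCover_pathTriplesFrom_erase hC.prop hj' hjj' hj's) (erase_subset j C) hj)
  rw [sum_eq_single_of_mem j₀ hj₀ fun j hj hne => ?_]
  · simp [pathTriple_apply, hsj₀]
  · rw [pathTriple_apply, if_neg]
    rintro ⟨h₁, h₂⟩
    rcases lt_trichotomy j j₀ with h | h | h
    · exact hnot j hj j₀ hj₀ h hsj₀.2
    · exact hne h
    · exact hnot j₀ hj₀ j hj h h₂

theorem hasTightCover_pathTriplesFrom_of_apply_eq_zero {a : Fin n →₀ ℕ} {v : Fin n}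
    (hsv : s ≤ v.1) (hvs : v.1 ≤ s + 2) (hav : a v = 0)
    (h : HasTightCover (pathTriplesFrom n (v.1 + 1)) a) :
    HasTightCover (pathTriplesFrom n s) a := by
  classical
  obtain ⟨C, hC, hpack⟩ := h
  refine ⟨insert v C, ?_, ?_⟩
  · rw [isCover_pathTriplesFrom_iff] at hC ⊢
    intro i hsi hi
    by_cases hvi : v.1 < i
    · obtain ⟨j, hj, hij⟩ := hC i hvi hi
      exact ⟨j, mem_insert_of_mem hj, hij⟩
    · refine ⟨v, mem_insert_self v C, ?_⟩
      omega
  · rw [sum_insert_zero hav]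
    exact hpack.mono_set (Set.image_mono fun i ⟨hvi, hi⟩ => ⟨by omega, hi⟩)

theorem hasTightCover_pathTriplesFrom_of_pathTriple_le {a : Fin n →₀ ℕ} (hs : s + 2 < n)
    (hle : pathTriple n s ≤ a) (h : HasTightCover (pathTriplesFrom n s) (a - pathTriple n s)) :
    HasTightCover (pathTriplesFrom n s) a := by
  obtain ⟨C₁, hC₁, hpack⟩ := h
  obtain ⟨C, hCC₁, hC⟩ := exists_minimal_le_of_wellFoundedLT
    (fun D : Finset (Fin n) => IsCover (pathTriplesFrom n s) D) C₁ hC₁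
  refine ⟨C, hC.prop, ?_⟩
  have hsum : ∑ j ∈ C, a j = ∑ j ∈ C, (a - pathTriple n s) j + 1 := by
    rw [← sum_pathTriple_eq_one_of_minimal hC hs, ← sum_add_distrib]
    exact sum_congr rfl fun j _ => (tsub_add_cancel_of_le (hle j)).symm
  have := (hpack.of_le (sum_le_sum_of_subset hCC₁)).add ⟨s, ⟨le_rfl, hs⟩, rfl⟩
  rwa [tsub_add_cancel_of_le hle, ← hsum] at this

theorem hasTightCover_pathTriplesFrom (s : ℕ) (a : Fin n →₀ ℕ) :
    HasTightCover (pathTriplesFrom n s) a := by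
  by_cases hs : s + 2 < n
  · by_cases hle : pathTriple n s ≤ a
    · exact hasTightCover_pathTriplesFrom_of_pathTriple_le hs hle
        (hasTightCover_pathTriplesFrom s (a - pathTriple n s))
    · obtain ⟨v, hv⟩ : ∃ v, a v < pathTriple n s v := by simpa [Finsupp.le_def] using hle
      rw [pathTriple_apply] at hv
      split_ifs at hv with hsv
      · exact hasTightCover_pathTriplesFrom_of_apply_eq_zero hsv.1 hsv.2 (by omega)
          (hasTightCover_pathTriplesFrom (v.1 + 1) a)
      · omega
  · exact ⟨∅, by simp [IsCover, pathTriplesFrom_eq_empty (not_lt.1 hs)], .zero⟩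
termination_by n - s + a.degree
decreasing_by
  · have hdeg := congrArg Finsupp.degree (tsub_add_cancel_of_le hle)
    have hne : (pathTriple n s).degree ≠ 0 := by
      rw [Ne, Finsupp.degree_eq_zero_iff, Finsupp.ext_iff, not_forall]
      exact ⟨⟨s, by omega⟩, by simp [pathTriple_apply]⟩
    rw [map_add] at hdeg
    omega
  · omega

theorem isMengerian_pathTriplesFrom (n s : ℕ) : IsMengerian (pathTriplesFrom n s) :=
  hasTightCover_pathTriplesFrom s

end PathTriples

/-- The 3-path ideal `(x_i x_{i+1} x_{i+2} : i = 1, …, n-2)` of the path graph `P_n`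
is normally torsion-free. -/
theorem path_ideal_ntf (K : Type*) [Field K] {n : ℕ} :
    NormallyTorsionFree (Ideal.span
      { m : MvPolynomial (Fin n) K | ∃ i : ℕ, ∃ h : i + 2 < n,
        m = X (⟨i, by omega⟩ : Fin n) * X (⟨i + 1, by omega⟩ : Fin n) *
          X (⟨i + 2, h⟩ : Fin n) }) := by
  convert normallyTorsionFree_span_monomial (K := K) pathTriple_le_one
    (isMengerian_pathTriplesFrom n 0) using 2
  ext m
  simp only [pathTriplesFrom, Set.image_image, Set.mem_image, Set.mem_ofPred_eq, zero_le, true_and]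
  constructor
  · rintro ⟨i, h, rfl⟩
    exact ⟨i, h, (X_mul_X_mul_X_eq_monomial_pathTriple (i := i) rfl rfl rfl).symm⟩
  · rintro ⟨i, h, rfl⟩
    exact ⟨i, h, (X_mul_X_mul_X_eq_monomial_pathTriple (i := i) rfl rfl rfl).symm⟩
end

section
/- For the cycle C_n on vertices 1,...,n (indices mod n), the closed neighborhood ideal NI(C_n) = (x_{i-1} x_i x_{i+1} : i = 1,...,n) is a normal ideal, i.e., all its powers are integrally closed. -/
open MvPolynomial

/-- The closed neighborhood ideal of the cycle `C_n`, generated by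
`x_{i-1} x_i x_{i+1}` for `i ∈ ℤ/n`. -/
noncomputable def cycleNI (K : Type*) [Field K] (n : ℕ) : Ideal (MvPolynomial (ZMod n) K) :=
  Ideal.span (Set.range fun i : ZMod n => X (i - 1) * X i * X (i + 1))

/-- A monomial ideal is normal if every power is integrally closed; a monomial `x^d` is
integral over `J` iff `(x^d)^k ∈ J^k` for some `k ≥ 1`. -/
def IsNormalMonomialIdeal {K : Type*} [Field K] {n : ℕ}
    (J : Ideal (MvPolynomial (ZMod n) K)) : Prop :=
  ∀ t : ℕ, 1 ≤ t → ∀ d : (ZMod n) →₀ ℕ,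
    (∃ k : ℕ, 1 ≤ k ∧ (monomial d (1 : K)) ^ k ∈ (J ^ t) ^ k) → monomial d (1 : K) ∈ J ^ t

section Aux
open Finset Pointwise

theorem sum_zmod (n : ℕ) [NeZero n] (f : ZMod n → ℕ) :
    ∑ i ∈ Finset.range n, f (i : ZMod n) = ∑ z : ZMod n, f z :=
  Finset.sum_nbij' (fun i : ℕ => (i : ZMod n)) (fun z => z.val)
    (fun _ _ => Finset.mem_univ _) (fun z _ => Finset.mem_range.2 z.val_lt)
    (fun i hi => ZMod.val_cast_of_lt (Finset.mem_range.1 hi))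
    (fun z _ => ZMod.natCast_rightInverse z) (fun _ _ => rfl)

theorem cycle_round (n k t : ℕ) [NeZero n] (hk : 1 ≤ k) (b d : ZMod n → ℕ)
    (hsum : ∑ j, b j = t * k) (hle : ∀ i, b (i + 1) + b i + b (i - 1) ≤ k * d i) :
    ∃ b' : ZMod n → ℕ, (∑ j, b' j = t) ∧ ∀ i, b' (i + 1) + b' i + b' (i - 1) ≤ d i := by
  set a : ℕ → ℕ := fun m => b (m : ZMod n) with ha
  set A : ℕ → ℕ := fun m => ∑ i ∈ Finset.range m, a i with hA
  have hAmono : Monotone A := fun x y h =>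
    Finset.sum_le_sum_of_subset (Finset.range_subset_range.2 h)
  have hAper : ∀ m, A (m + n) = A m + t * k := by
    intro m
    have h1 : A (m + n) = A m + ∑ i ∈ Finset.range n, a (m + i) :=
      Finset.sum_range_add a m n
    have h2 : ∑ i ∈ Finset.range n, a (m + i)
        = ∑ z : ZMod n, b ((m : ZMod n) + z) := by
      rw [← sum_zmod n (fun z => b ((m : ZMod n) + z))]
      apply Finset.sum_congr rfl
      intro i _
      simp only [ha]
      norm_cast
    have h3 : ∑ z : ZMod n, b ((m : ZMod n) + z) = ∑ z : ZMod n, b z :=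
      Fintype.sum_equiv (Equiv.addLeft (m : ZMod n)) _ _ (fun z => rfl)
    rw [h1, h2, h3, hsum]
  set S : ℕ → ℕ := fun m => A m / k with hS
  have hSmono : Monotone S := fun x y h => Nat.div_le_div_right (hAmono h)
  have hSper : ∀ m, S (m + n) = S m + t := by
    intro m
    simp only [hS]
    rw [hAper m, mul_comm t k, Nat.add_mul_div_left _ _ hk]
  have hSshift : ∀ x q, S (x + n * q) = S x + t * q := by
    intro x q
    induction q with
    | zero => simp
    | succ q ih =>
        have h : x + n * (q + 1) = (x + n * q) + n := by ring
        rw [h, hSper, ih]; ring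
  set b' : ZMod n → ℕ := fun j => S (j.val + 1) - S j.val with hb'
  have key : ∀ (m : ℕ) (j : ZMod n), (m : ZMod n) = j → b' j = S (m + 1) - S m := by
    intro m j hj
    have hv : j.val = m % n := by rw [← hj, ZMod.val_natCast]
    obtain ⟨q, hq⟩ : ∃ q, m = j.val + n * q :=
      ⟨m / n, by rw [hv, Nat.add_comm]; exact (Nat.div_add_mod m n).symm⟩
    subst hq
    have h1 : j.val + n * q + 1 = (j.val + 1) + n * q := by ring
    rw [h1, hSshift, hSshift]
    simp only [hb']
    omega
  have hS0 : S 0 = 0 := by simp [hS, hA]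
  have hSn : S n = t := by
    have hAn : A n = t * k := by
      simp only [hA, ha]
      rw [sum_zmod n b, hsum]
    simp only [hS, hAn]
    exact Nat.mul_div_cancel t (by omega)
  refine ⟨b', ?_, ?_⟩
  · rw [← sum_zmod n b']
    have h : ∀ i ∈ Finset.range n, b' ((i : ZMod n)) = S (i + 1) - S i := by
      intro i _; exact key i _ rfl
    rw [Finset.sum_congr rfl h, Finset.sum_range_tsub hSmono, hS0, hSn]
    omega
  · intro i
    have hn : 1 ≤ n := Nat.one_le_iff_ne_zero.2 (NeZero.ne n)
    set p : ℕ := i.val + n - 1 with hp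
    have hpv : p + 1 = i.val + n := by omega
    have hiv : ((i.val : ℕ) : ZMod n) = i := ZMod.natCast_rightInverse i
    have c2 : ((p + 1 : ℕ) : ZMod n) = i := by
      rw [hpv]; push_cast [hiv]; simp
    have c1 : ((p : ℕ) : ZMod n) = i - 1 := by
      have h : ((p : ℕ) : ZMod n) + 1 = i := by
        rw [← Nat.cast_one, ← Nat.cast_add, c2]
      rw [← h]; ring
    have c3 : ((p + 2 : ℕ) : ZMod n) = i + 1 := by
      push_cast [c1]; ring
    have e1 : b' (i - 1) = S (p + 1) - S p := key p _ c1
    have e2 : b' i = S (p + 2) - S (p + 1) := key (p + 1) _ c2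
    have e3 : b' (i + 1) = S (p + 3) - S (p + 2) := key (p + 2) _ c3
    have hA3 : A (p + 3) = A p + (a p + a (p + 1) + a (p + 2)) := by
      simp only [hA]
      rw [Finset.sum_range_succ, Finset.sum_range_succ, Finset.sum_range_succ]
      ring
    have hav : a p + a (p + 1) + a (p + 2) ≤ k * d i := by
      have g1 : a p = b (i - 1) := by simp only [ha]; rw [c1]
      have g2 : a (p + 1) = b i := by simp only [ha]; rw [c2]
      have g3 : a (p + 2) = b (i + 1) := by simp only [ha]; rw [c3]
      rw [g1, g2, g3]
      have := hle i; omega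
    have hfin : S (p + 3) ≤ S p + d i := by
      have h4 : A (p + 3) ≤ A p + d i * k := by rw [hA3]; nlinarith [hav]
      calc S (p + 3) = A (p + 3) / k := rfl
        _ ≤ (A p + d i * k) / k := Nat.div_le_div_right h4
        _ = A p / k + d i := Nat.add_mul_div_right _ _ (by omega)
        _ = S p + d i := rfl
    have m1 : S p ≤ S (p + 1) := hSmono (by omega)
    have m2 : S (p + 1) ≤ S (p + 2) := hSmono (by omega)
    have m3 : S (p + 2) ≤ S (p + 3) := hSmono (by omega)
    omega
variable {K : Type*} [Field K] {n : ℕ}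

noncomputable def wvec (n : ℕ) (j : ZMod n) : (ZMod n) →₀ ℕ :=
  Finsupp.single (j - 1) 1 + Finsupp.single j 1 + Finsupp.single (j + 1) 1

theorem gen_eq (K : Type*) [Field K] (n : ℕ) (j : ZMod n) :
    X (j - 1) * X j * X (j + 1) = monomial (wvec n j) (1 : K) := by
  rw [wvec, X, X, X, monomial_mul, monomial_mul]
  norm_num

theorem wvec_apply [NeZero n] (c : ZMod n → ℕ) (i : ZMod n) :
    (∑ j : ZMod n, c j • wvec n j) i = c (i + 1) + c i + c (i - 1) := by
  rw [Finset.sum_apply']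
  simp only [Finsupp.smul_apply, wvec, Finsupp.add_apply, Finsupp.single_apply, smul_eq_mul]
  have h1 : ∀ j : ZMod n, (j - 1 = i) = (j = i + 1) := by
    intro j; rw [sub_eq_iff_eq_add]
  have h2 : ∀ j : ZMod n, (j + 1 = i) = (j = i - 1) := by
    intro j; rw [eq_comm, eq_sub_iff_add_eq, eq_comm]
  simp only [h1, h2, mul_add, mul_ite, mul_one, mul_zero, Finset.sum_add_distrib,
    Finset.sum_ite_eq', Finset.mem_univ, if_true]

theorem prod_pow_mem_pow {R : Type*} [CommRing R] (I : Ideal R) {ι : Type*} (s : Finset ι)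
    (f : ι → R) (hf : ∀ i ∈ s, f i ∈ I) (c : ι → ℕ) :
    (∏ i ∈ s, f i ^ c i) ∈ I ^ (∑ i ∈ s, c i) := by
  classical
  induction s using Finset.induction_on with
  | empty => simp [Ideal.one_eq_top]
  | @insert a s' hnot ih =>
      rw [Finset.prod_insert hnot, Finset.sum_insert hnot, pow_add]
      exact Ideal.mul_mem_mul (Ideal.pow_mem_pow (hf a (Finset.mem_insert_self a s')) _)
        (ih fun i hi => hf i (Finset.mem_insert_of_mem hi))

theorem monomial_mem_pow_of [NeZero n] (D : ZMod n →₀ ℕ) (t : ℕ) (c : ZMod n → ℕ)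
    (hc : ∑ j, c j = t) (hle : ∀ i, c (i + 1) + c i + c (i - 1) ≤ D i) :
    monomial D (1 : K) ∈ (cycleNI K n) ^ t := by
  set E : (ZMod n) →₀ ℕ := ∑ j : ZMod n, c j • wvec n j with hE
  have hED : E ≤ D := by
    rw [Finsupp.le_def]
    intro i
    rw [hE, wvec_apply]
    exact hle i
  have h1 : monomial D (1 : K) = monomial (D - E) 1 * monomial E 1 := by
    rw [monomial_mul, one_mul, tsub_add_cancel_of_le hED]
  have h2 : (monomial E (1 : K)) = ∏ j : ZMod n, (monomial (wvec n j) 1) ^ c j := by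
    rw [hE, monomial_sum_one]
    apply Finset.prod_congr rfl
    intro j _
    rw [monomial_pow, one_pow]
  rw [h1, h2, ← hc]
  apply Ideal.mul_mem_left
  apply prod_pow_mem_pow
  intro j _
  rw [← gen_eq]
  exact Ideal.subset_span ⟨j, rfl⟩

theorem exists_of_monomial_mem_pow [NeZero n] (D : ZMod n →₀ ℕ) (s : ℕ)
    (h : monomial D (1 : K) ∈ (cycleNI K n) ^ s) :
    ∃ c : ZMod n → ℕ, (∑ j, c j = s) ∧ ∀ i, c (i + 1) + c i + c (i - 1) ≤ D i := by
  classical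
  set T : Set ((ZMod n) →₀ ℕ) := {e | ∃ f : Fin s → ZMod n, e = ∑ i, wvec n (f i)} with hT
  rw [cycleNI, ← Ideal.submodule_span_eq, Submodule.span_pow] at h
  have hsub : (Set.range fun i : ZMod n => X (i - 1) * X i * X (i + 1) :
      Set (MvPolynomial (ZMod n) K)) ^ s ⊆ (fun e => monomial e (1 : K)) '' T := by
    intro x hx
    rw [Set.mem_pow] at hx
    obtain ⟨f, hf⟩ := hx
    have hmem : ∀ i : Fin s, ∃ j : ZMod n, X (j - 1) * X j * X (j + 1) = (f i : MvPolynomial (ZMod n) K) :=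
      fun i => (f i).2
    choose gi hgi using hmem
    refine ⟨∑ i, wvec n (gi i), ⟨gi, rfl⟩, ?_⟩
    show monomial (∑ i : Fin s, wvec n (gi i)) (1 : K) = x
    rw [← hf, List.prod_ofFn, monomial_sum_one]
    apply Finset.prod_congr rfl
    intro i _
    rw [← hgi i, gen_eq]
  have h2 : monomial D (1 : K) ∈ Ideal.span ((fun e => monomial e (1 : K)) '' T) :=
    Ideal.span_mono hsub h
  rw [mem_ideal_span_monomial_image] at h2
  have hD : D ∈ (monomial D (1 : K)).support := by
    rw [support_monomial]; simp
  obtain ⟨e, ⟨f, rfl⟩, hle⟩ := h2 D hD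
  refine ⟨fun j => ∑ i : Fin s, if f i = j then 1 else 0, ?_, ?_⟩
  · rw [Finset.sum_comm]
    simp [Finset.sum_ite_eq']
  · intro i0
    have hEq : ∑ j : ZMod n, (∑ i : Fin s, if f i = j then 1 else 0) • wvec n j
        = ∑ i : Fin s, wvec n (f i) := by
      simp_rw [Finset.sum_smul]
      rw [Finset.sum_comm]
      simp [ite_smul, Finset.sum_ite_eq']
    have := wvec_apply (n := n) (fun j => ∑ i : Fin s, if f i = j then 1 else 0) i0
    rw [hEq] at this
    rw [← this]
    exact hle i0


end Aux

/-- The closed neighborhood ideal of a cycle is a normal ideal. -/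
theorem cycleNI_normal (K : Type*) [Field K] (n : ℕ) (hn : 3 ≤ n) :
    IsNormalMonomialIdeal (cycleNI K n) := by
  haveI : NeZero n := ⟨by omega⟩
  rintro t ht d ⟨k, hk, hmem⟩
  rw [← pow_mul, monomial_pow, one_pow] at hmem
  obtain ⟨c, hc, hcle⟩ := exists_of_monomial_mem_pow (k • d) (t * k) hmem
  have hcle' : ∀ i, c (i + 1) + c i + c (i - 1) ≤ k * d i := by
    intro i
    simpa using hcle i
  obtain ⟨b', hb1, hb2⟩ := cycle_round n k t hk c (fun i => d i) hc hcle'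
  exact monomial_mem_pow_of d t b' hb1 hb2
end

section
/- Let n ≥ 4 with n not divisible by 3, and let I_n = NI(C_n) ⊂ R = K[x_1,...,x_n]. Then depth(R/I_n^{n-1}) = 0; in particular the maximal ideal m = (x_1,...,x_n) is an associated prime of R/I_n^{n-1}. -/
/-!
Since `3 ∤ n` there are `q ∈ {1, 2}` and `M ≤ n - 1` with `3 M = q n + 1`. The `q n + 1`
consecutive variables `x_j, x_{j+1}, …` run `q` times around the cycle and end at `x_j` again,
so `x_j (x_1 ⋯ x_n)^q` is the product of the `M` generators `x_{j+3k} x_{j+3k+1} x_{j+3k+2}`,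
`k < M`. Hence, with `g` any generator and `E = n - 1 - M`, `w = (x_1 ⋯ x_n)^q g^E` satisfies
`m w ⊆ I^{n-1}`, while `w` has degree `3(n - 1) - 1` and so is not in `I^{n-1} ⊆ m^{3(n-1)}`.
The class of `w` is a nonzero element of `R/I^{n-1}` killed by the maximal ideal `m`.
-/

open MvPolynomial

theorem Ideal.IsMaximal.mem_associatedPrimes_of_smul_eq_zero {R M : Type*} [CommRing R]
    [AddCommGroup M] [Module R M] {m : Ideal R} (hm : m.IsMaximal) {x : M} (hx : x ≠ 0)
    (hmx : ∀ r ∈ m, r • x = 0) : m ∈ associatedPrimes R M := by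
  have hcolon : m = (⊥ : Submodule R M).colon {x} := by
    refine hm.eq_of_le (fun h ↦ hx ?_) fun r hr ↦ ?_
    · have h1 : (1 : R) ∈ (⊥ : Submodule R M).colon {x} := h ▸ Submodule.mem_top
      simpa using Submodule.mem_colon_singleton.mp h1
    · simpa [Submodule.mem_colon_singleton] using hmx r hr
  exact ⟨hm.isPrime, x, by rw [← hcolon, hm.isPrime.radical]⟩

theorem Finset.prod_range_mul_eq_prod_prod {α : Type*} [CommMonoid α] (f : ℕ → α) (b M : ℕ) :
    ∏ r ∈ range (b * M), f r = ∏ k ∈ range M, ∏ i ∈ range b, f (b * k + i) := by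
  induction M with
  | zero => simp
  | succ M ih => rw [Nat.mul_succ, prod_range_add, ih, prod_range_succ]

theorem ZMod.prod_range_natCast_add {α : Type*} [CommMonoid α] {n : ℕ} [NeZero n]
    (f : ZMod n → α) (c : ZMod n) : ∏ r ∈ Finset.range n, f (c + r) = ∏ i, f i := by
  refine Finset.prod_nbij' (c + ·) (fun i ↦ (i - c).val) (by simp) (by simp [ZMod.val_lt])
    (fun r hr ↦ ?_) (by simp) (by simp)
  simpa using ZMod.val_natCast_of_lt (Finset.mem_range.mp hr)

theorem ZMod.prod_range_mul_natCast_add {α : Type*} [CommMonoid α] {n : ℕ} [NeZero n]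
    (f : ZMod n → α) (c : ZMod n) (q : ℕ) :
    ∏ r ∈ Finset.range (n * q), f (c + r) = (∏ i, f i) ^ q := by
  simp [Finset.prod_range_mul_eq_prod_prod, ZMod.prod_range_natCast_add]

namespace MvPolynomial

variable {σ R : Type*}

theorem smul_eq_zero_of_mem_idealOfVars [CommSemiring R] {M : Type*} [AddCommMonoid M]
    [Module (MvPolynomial σ R) M] {x : M} (hx : ∀ i, (X i : MvPolynomial σ R) • x = 0)
    {r : MvPolynomial σ R} (hr : r ∈ idealOfVars σ R) : r • x = 0 := by
  have hle : idealOfVars σ R ≤ (⊥ : Submodule _ M).colon {x} :=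
    Ideal.span_le.mpr <| Set.range_subset_iff.mpr fun i ↦ Submodule.mem_colon_singleton.mpr (hx i)
  simpa using Submodule.mem_colon_singleton.mp (hle hr)

theorem idealOfVars_eq_ker_constantCoeff [CommSemiring R] :
    idealOfVars σ R = RingHom.ker (constantCoeff : MvPolynomial σ R →+* R) := by
  ext p
  rw [← pow_one (idealOfVars σ R), mem_pow_idealOfVars_iff', RingHom.mem_ker, constantCoeff_eq]
  simp [Finsupp.degree_eq_zero_iff]

theorem isMaximal_idealOfVars [Field R] : (idealOfVars σ R).IsMaximal := by
  rw [idealOfVars_eq_ker_constantCoeff]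
  exact RingHom.ker_isMaximal_of_surjective _ fun r ↦ ⟨C r, constantCoeff_C σ r⟩

theorem IsHomogeneous.notMem_pow_idealOfVars [CommSemiring R] {p : MvPolynomial σ R} {d N : ℕ}
    (hp : p.IsHomogeneous d) (hp0 : p ≠ 0) (hdN : d < N) : p ∉ idealOfVars σ R ^ N := by
  obtain ⟨x, hx⟩ := support_nonempty.mpr hp0
  have hx_deg : x.degree = d := by
    rw [Finsupp.degree_eq_weight_one]
    exact hp (mem_support_iff.mp hx)
  rw [mem_pow_idealOfVars_iff]
  exact fun h ↦ absurd (h x hx) (by omega)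

end MvPolynomial

theorem Nat.exists_three_mul_eq_mul_add_one {n : ℕ} (hn : 4 ≤ n) (h3 : ¬ 3 ∣ n) :
    ∃ q M : ℕ, 3 * M = n * q + 1 ∧ M ≤ n - 1 := by
  rcases (by omega : n % 3 = 1 ∨ n % 3 = 2) with h | h
  · exact ⟨2, (2 * n + 1) / 3, by omega, by omega⟩
  · exact ⟨1, (n + 1) / 3, by omega, by omega⟩

section cycleNI

variable {K : Type*} [Field K] {n : ℕ}

theorem X_mul_X_mul_X_mem_cycleNI (i : ZMod n) :
    (X (i - 1) * X i * X (i + 1) : MvPolynomial (ZMod n) K) ∈ cycleNI K n :=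
  Ideal.subset_span ⟨i, rfl⟩

theorem cycleNI_le_idealOfVars_pow_three : cycleNI K n ≤ idealOfVars (ZMod n) K ^ 3 := by
  refine Ideal.span_le.mpr <| Set.range_subset_iff.mpr fun i ↦ ?_
  have hX (j : ZMod n) : X j ∈ idealOfVars (ZMod n) K := Ideal.subset_span ⟨j, rfl⟩
  rw [pow_three']
  exact Ideal.mul_mem_mul (Ideal.mul_mem_mul (hX _) (hX _)) (hX _)

variable [NeZero n] {q M : ℕ}

theorem X_mul_prod_X_pow_mem_cycleNI_pow (h : 3 * M = n * q + 1) (j : ZMod n) :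
    X j * (∏ i, X i) ^ q ∈ cycleNI K n ^ M := by
  have hprod : X j * (∏ i, X i) ^ q = ∏ k ∈ Finset.range M,
      (X (j + 1 + 3 * k - 1) * X (j + 1 + 3 * k) * X (j + 1 + 3 * k + 1) :
        MvPolynomial (ZMod n) K) := calc
    X j * (∏ i, X i) ^ q = ∏ r ∈ Finset.range (3 * M), (X (j + r) : MvPolynomial (ZMod n) K) := by
      rw [h, Finset.prod_range_succ', ← ZMod.prod_range_mul_natCast_add _ (j + 1)]
      simp [add_assoc, add_comm (1 : ZMod n), mul_comm]
    _ = _ := by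
      rw [Finset.prod_range_mul_eq_prod_prod]
      refine Finset.prod_congr rfl fun k _ ↦ ?_
      simp only [Finset.prod_range_succ, Finset.prod_range_zero, one_mul]
      push_cast
      ring_nf
  rw [hprod]
  simpa using Ideal.prod_mem_prod (s := Finset.range M) (I := fun _ ↦ cycleNI K n)
    fun k _ ↦ X_mul_X_mul_X_mem_cycleNI _

theorem X_mul_prod_X_pow_mul_pow_mem_cycleNI_pow (h : 3 * M = n * q + 1) (E : ℕ) (c j : ZMod n) :
    X j * ((∏ i, X i) ^ q * (X (c - 1) * X c * X (c + 1)) ^ E) ∈ cycleNI K n ^ (M + E) := by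
  rw [← mul_assoc, pow_add]
  exact Ideal.mul_mem_mul (X_mul_prod_X_pow_mem_cycleNI_pow h j)
    (Ideal.pow_mem_pow (X_mul_X_mul_X_mem_cycleNI c) E)

theorem prod_X_pow_mul_pow_notMem_cycleNI_pow (h : 3 * M = n * q + 1) (E : ℕ) (c : ZMod n) :
    (∏ i, X i) ^ q * (X (c - 1) * X c * X (c + 1)) ^ E ∉ cycleNI K n ^ (M + E) := by
  have hprod := IsHomogeneous.prod (Finset.univ : Finset (ZMod n)) _ (fun _ ↦ 1) fun i _ ↦
    isHomogeneous_X K i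
  have hgen := ((isHomogeneous_X K (c - 1)).mul (isHomogeneous_X K c)).mul
    (isHomogeneous_X K (c + 1))
  have hdeg := (hprod.pow q).mul (hgen.pow E)
  simp only [Finset.sum_const, Finset.card_univ, ZMod.card, smul_eq_mul, mul_one] at hdeg
  refine fun hmem ↦ hdeg.notMem_pow_idealOfVars (by simp [Finset.prod_ne_zero_iff, X_ne_zero])
    (by omega : _ < 3 * (M + E)) ?_
  rw [pow_mul]
  exact Ideal.pow_right_mono cycleNI_le_idealOfVars_pow_three _ hmem

end cycleNI

/-- For `n ≥ 4` with `3 ∤ n` and `I_n = NI(C_n)`, we have `depth(R/I_n^{n-1}) = 0`: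
no element of the graded maximal ideal `m = (x_1,…,x_n)` is regular on `R/I_n^{n-1}`;
in particular `m` is an associated prime of `R/I_n^{n-1}`. -/
theorem depth_cycleNI_pow (K : Type*) [Field K] (n : ℕ) (hn : 4 ≤ n) (h3 : ¬ (3 ∣ n)) :
    (∀ r ∈ Ideal.span (Set.range (X : ZMod n → MvPolynomial (ZMod n) K)),
        ¬ IsSMulRegular (MvPolynomial (ZMod n) K ⧸ (cycleNI K n) ^ (n - 1)) r) ∧
      Ideal.span (Set.range (X : ZMod n → MvPolynomial (ZMod n) K)) ∈
        associatedPrimes (MvPolynomial (ZMod n) K)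
          (MvPolynomial (ZMod n) K ⧸ (cycleNI K n) ^ (n - 1)) := by
  have : NeZero n := ⟨by omega⟩
  obtain ⟨q, M, hqM, hMn⟩ := Nat.exists_three_mul_eq_mul_add_one hn h3
  obtain ⟨E, hE⟩ : ∃ E, n - 1 = M + E := ⟨n - 1 - M, by omega⟩
  rw [hE]
  set w : MvPolynomial (ZMod n) K := (∏ i, X i) ^ q * (X (0 - 1) * X 0 * X (0 + 1)) ^ E
  have hw_ne : Ideal.Quotient.mk (cycleNI K n ^ (M + E)) w ≠ 0 := by
    rw [Ne, Ideal.Quotient.eq_zero_iff_mem]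
    exact prod_X_pow_mul_pow_notMem_cycleNI_pow hqM E 0
  have hw_ann : ∀ r ∈ idealOfVars (ZMod n) K,
      r • Ideal.Quotient.mk (cycleNI K n ^ (M + E)) w = 0 :=
    fun r ↦ smul_eq_zero_of_mem_idealOfVars fun j ↦ Ideal.Quotient.eq_zero_iff_mem.mpr
      (X_mul_prod_X_pow_mul_pow_mem_cycleNI_pow hqM E 0 j)
  exact ⟨fun r hr hreg ↦ hw_ne (hreg.right_eq_zero_of_smul (hw_ann r hr)),
    isMaximal_idealOfVars.mem_associatedPrimes_of_smul_eq_zero hw_ne hw_ann⟩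
end
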